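/- Let t ≥ 1, let R be a d×t random matrix whose entries are i.i.d., each equal to +1/√t or −1/√t with probability 1/2, let C ∈ ℝ^{n×d} be a nonzero real matrix, and let ε > 0. Then Prob[ |‖CR‖_F² − ‖C‖_F²| ≥ ε‖C‖_F² ] ≤ 2/(t·ε²). In particular, with probability at least 1 − 2/(t·ε²), ‖CR‖_F ≤ √(1+ε)·‖C‖_F. -/

import Mathlib

open MeasureTheory
open scoped Matrix

/-- Frobenius norm of a real matrix. -/
noncomputable def frobNorm {m n : ℕ} (M : Matrix (Fin m) (Fin n) ℝ) : ℝ :=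
  Real.sqrt (∑ i, ∑ j, (M i j) ^ 2)

/-- Spectral (operator) norm of a real matrix, viewed as a linear map between
Euclidean spaces. -/
noncomputable def specNorm {m n : ℕ} (M : Matrix (Fin m) (Fin n) ℝ) : ℝ :=
  ‖LinearMap.toContinuousLinearMap (Matrix.toEuclideanLin M)‖

/-- `P` is the Moore–Penrose pseudoinverse of `M` (the four Penrose conditions;
such a `P` is unique). -/
def IsMoorePenrose {m n : ℕ} (M : Matrix (Fin m) (Fin n) ℝ)
    (P : Matrix (Fin n) (Fin m) ℝ) : Prop :=
  M * P * M = M ∧ P * M * P = P ∧ (M * P)ᵀ = M * P ∧ (P * M)ᵀ = P * M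

/-- `X` is an `n × k` cluster indicator matrix: each row `i` has a single nonzero
entry, in column `f i`, equal to `1/√(z_{f i})` where `z_j` is the number of rows
assigned to column `j`. -/
def IsIndicator {n k : ℕ} (X : Matrix (Fin n) (Fin k) ℝ) : Prop :=
  ∃ f : Fin n → Fin k, ∀ i j, X i j =
    if f i = j then 1 / Real.sqrt ((Finset.univ.filter fun i' => f i' = j).card) else 0

/-- The singular values of a `k × t` real matrix `M` (in some order): the square
roots of the eigenvalues of `M * Mᵀ`. -/
noncomputable def singVals {k t : ℕ} (M : Matrix (Fin k) (Fin t) ℝ) (i : Fin k) : ℝ :=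
  Real.sqrt ((Matrix.isHermitian_mul_conjTranspose_self M).eigenvalues i)

/-- The `d × t` random sign matrix with entries `±1/√t`, as a function of the
sample point `ω` (a `d × t` array of fair coins). -/
noncomputable def signMatrix (d t : ℕ) (ω : Fin d → Fin t → Bool) :
    Matrix (Fin d) (Fin t) ℝ :=
  Matrix.of fun i j => (if ω i j then (1 : ℝ) else -1) / Real.sqrt t

/-- The law of a `d × t` matrix of i.i.d. fair signs: the uniform probability
measure on all `d × t` sign patterns. -/
noncomputable def signMeasure (d t : ℕ) : Measure (Fin d → Fin t → Bool) :=
  (PMF.uniformOfFintype (Fin d → Fin t → Bool)).toMeasure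

/-!
Write `r_{kl} = ±1` for the signs, so that `R = r / √t`, and `G = Cᵀ C`. Expanding the square
gives `‖CR‖_F² = ‖C‖_F² + Y / t` with `Y = ∑_l ∑_{k ≠ k'} G_{kk'} r_{kl} r_{k'l}`. Flipping a single
sign is a measure-preserving involution, so a product of signs in which some sign occurs an odd
number of times has mean zero. Hence the products `r_{kl} r_{k'l}` are orthonormal up to the
coincidence of `(k, k', l)` with `(k', k, l)`, and `E[Y²] = 2t ∑_{k ≠ k'} G_{kk'}² ≤ 2t ‖C‖_F⁴` by
Cauchy–Schwarz. Chebyshev's inequality for `Y / t` gives the first bound; the second claim holds on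
the complementary event.
-/

open Finset

section Rademacher

variable {ι κ : Type*}

def rademacher (ω : ι → κ → Bool) (P : ι × κ) : ℝ := if ω P.1 P.2 then 1 else -1

lemma rademacher_mul_self (ω : ι → κ → Bool) (P : ι × κ) :
    rademacher ω P * rademacher ω P = 1 := by
  unfold rademacher; split_ifs <;> norm_num

variable [DecidableEq ι] [DecidableEq κ]

def flipAt (P : ι × κ) (ω : ι → κ → Bool) : ι → κ → Bool :=
  fun i j => if (i, j) = P then !ω i j else ω i j

lemma flipAt_involutive (P : ι × κ) : Function.Involutive (flipAt P) := by
  intro ω; funext i j; unfold flipAt; split_ifs <;> simp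

lemma rademacher_flipAt (P Q : ι × κ) (ω : ι → κ → Bool) :
    rademacher (flipAt P ω) Q = if Q = P then -rademacher ω Q else rademacher ω Q := by
  unfold rademacher flipAt
  split_ifs <;> simp_all

variable [Fintype ι] [Fintype κ]

lemma sum_eq_zero_of_flipAt_eq_neg (P : ι × κ) {F : (ι → κ → Bool) → ℝ}
    (hF : ∀ ω, F (flipAt P ω) = -F ω) : ∑ ω, F ω = 0 := by
  have h := Equiv.sum_comp (flipAt_involutive P).toPerm F
  simp only [Function.Involutive.coe_toPerm, hF, sum_neg_distrib] at h
  linarith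

lemma sum_rademacher_four_eq_zero {P Q P' Q' : ι × κ} (hQ : Q ≠ P) (hP' : P' ≠ P)
    (hQ' : Q' ≠ P) :
    ∑ ω, rademacher ω P * rademacher ω Q * rademacher ω P' * rademacher ω Q' = 0 := by
  refine sum_eq_zero_of_flipAt_eq_neg P fun ω => ?_
  simp only [rademacher_flipAt, if_neg hQ, if_neg hP', if_neg hQ', ↓reduceIte]
  ring

lemma sum_rademacher_four {P Q P' Q' : ι × κ} (hPQ : P ≠ Q) :
    ∑ ω, rademacher ω P * rademacher ω Q * rademacher ω P' * rademacher ω Q' =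
      if (P' = P ∧ Q' = Q) ∨ (P' = Q ∧ Q' = P) then
        (Fintype.card (ι → κ → Bool) : ℝ) else 0 := by
  split_ifs with h
  · rw [← nsmul_one, ← card_univ, ← sum_const]
    refine sum_congr rfl fun ω _ => ?_
    rcases h with ⟨rfl, rfl⟩ | ⟨rfl, rfl⟩ <;>
      linear_combination (rademacher ω Q' * rademacher ω Q') * rademacher_mul_self ω P' +
        rademacher_mul_self ω Q'
  · simp only [not_or, not_and] at h
    by_cases hP' : P' = P
    · rw [← sum_rademacher_four_eq_zero (P := Q) hPQ (hP' ▸ hPQ) (h.1 hP')]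
      exact sum_congr rfl fun ω _ => by ring
    by_cases hQ' : Q' = P
    · rw [← sum_rademacher_four_eq_zero (P := Q) hPQ (fun h' => h.2 h' hQ') (hQ' ▸ hPQ)]
      exact sum_congr rfl fun ω _ => by ring
    exact sum_rademacher_four_eq_zero (Ne.symm hPQ) hP' hQ'

end Rademacher

lemma sum_sq_sum_mul {α Ω : Type*} [Fintype Ω] (s : Finset α) (a : α → ℝ) (f : α → Ω → ℝ) :
    ∑ ω, (∑ x ∈ s, a x * f x ω) ^ 2 = ∑ x ∈ s, ∑ y ∈ s, a x * a y * ∑ ω, f x ω * f y ω := by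
  simp only [sq, sum_mul_sum]
  rw [sum_comm]
  refine sum_congr rfl fun x _ => ?_
  rw [sum_comm]
  refine sum_congr rfl fun y _ => ?_
  rw [mul_sum]
  exact sum_congr rfl fun ω _ => by ring

section OffDiagForm

variable {ι κ : Type*} [Fintype ι] [Fintype κ] [DecidableEq ι] [DecidableEq κ]

def pairSign (ω : ι → κ → Bool) (x : (ι × ι) × κ) : ℝ :=
  rademacher ω (x.1.1, x.2) * rademacher ω (x.1.2, x.2)

def offDiagForm (G : Matrix ι ι ℝ) (ω : ι → κ → Bool) : ℝ :=
  ∑ x ∈ (univ : Finset ι).offDiag ×ˢ (univ : Finset κ), G x.1.1 x.1.2 * pairSign ω x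

lemma sum_pairSign_mul_pairSign {x y : (ι × ι) × κ} (hx : x.1.1 ≠ x.1.2) :
    ∑ ω, pairSign ω x * pairSign ω y =
      (if y = x then (Fintype.card (ι → κ → Bool) : ℝ) else 0) +
        (if y = (x.1.swap, x.2) then (Fintype.card (ι → κ → Bool) : ℝ) else 0) := by
  have hne : (x.1.1, x.2) ≠ (x.1.2, x.2) := by simpa using hx
  simp only [pairSign, ← mul_assoc]
  rw [sum_rademacher_four hne]
  obtain ⟨⟨k, k'⟩, l⟩ := x
  obtain ⟨⟨j, j'⟩, m⟩ := y
  simp only [Prod.mk.injEq, Prod.swap_prod_mk] at hx ⊢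
  by_cases h1 : j = k ∧ j' = k' ∧ m = l
  · obtain ⟨rfl, rfl, rfl⟩ := h1
    simp [hx]
  by_cases h2 : j = k' ∧ j' = k ∧ m = l
  · obtain ⟨rfl, rfl, rfl⟩ := h2
    simp [hx, Ne.symm hx]
  rw [if_neg (by tauto), if_neg (by tauto), if_neg (by tauto), add_zero]

lemma sum_offDiagForm_sq {G : Matrix ι ι ℝ} (hG : G.IsSymm) :
    ∑ ω : ι → κ → Bool, offDiagForm G ω ^ 2 = Fintype.card (ι → κ → Bool) *
      (2 * Fintype.card κ * ∑ p ∈ (univ : Finset ι).offDiag, G p.1 p.2 ^ 2) := by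
  set N : ℝ := (Fintype.card (ι → κ → Bool) : ℝ)
  set s := (univ : Finset ι).offDiag ×ˢ (univ : Finset κ)
  have hs : ∀ x ∈ s, x.1.1 ≠ x.1.2 := fun x hx => (mem_offDiag.1 (mem_product.1 hx).1).2.2
  have hswap : ∀ x ∈ s, (x.1.swap, x.2) ∈ s := fun x hx => by
    simp only [s, mem_product, mem_offDiag, mem_univ, true_and, and_true] at hx ⊢
    exact Ne.symm hx
  have inner : ∀ x ∈ s, ∑ y ∈ s, G x.1.1 x.1.2 * G y.1.1 y.1.2 *
      ∑ ω, pairSign ω x * pairSign ω y = N * (2 * G x.1.1 x.1.2 ^ 2) := by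
    intro x hx
    simp only [sum_pairSign_mul_pairSign (hs x hx), mul_add, mul_ite, mul_zero, sum_add_distrib,
      sum_ite_eq', hx, hswap x hx, ↓reduceIte, Prod.fst_swap, Prod.snd_swap, hG.apply]
    ring
  unfold offDiagForm
  rw [sum_sq_sum_mul, sum_congr rfl inner, ← mul_sum, sum_product]
  simp only [sum_const, card_univ, nsmul_eq_mul, mul_sum]
  exact sum_congr rfl fun p _ => by ring

end OffDiagForm

section Gram

variable {m ι : Type*} [Fintype m] [Fintype ι]

lemma sum_sq_sum_mul_eq_gram (C : Matrix m ι ℝ) (v : ι → ℝ) :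
    ∑ i, (∑ k, C i k * v k) ^ 2 = ∑ k, ∑ k', (Cᵀ * C) k k' * (v k * v k') := by
  simp only [sq, sum_mul_sum, Matrix.mul_apply, Matrix.transpose_apply]
  rw [sum_comm]
  refine sum_congr rfl fun k _ => ?_
  rw [sum_comm, sum_congr rfl fun k' _ => sum_mul ..]
  exact sum_congr rfl fun k' _ => sum_congr rfl fun i _ => by ring

lemma sum_sum_mul_eq_trace_add_offDiag [DecidableEq ι] (G : Matrix ι ι ℝ) {v : ι → ℝ}
    (hv : ∀ k, v k * v k = 1) :
    ∑ k, ∑ k', G k k' * (v k * v k') =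
      G.trace + ∑ p ∈ (univ : Finset ι).offDiag, G p.1 p.2 * (v p.1 * v p.2) := by
  rw [← sum_product', ← diag_union_offDiag, sum_union (disjoint_diag_offDiag _), sum_diag]
  simp [hv, Matrix.trace]

end Gram

lemma frobNorm_nonneg {m n : ℕ} (M : Matrix (Fin m) (Fin n) ℝ) : 0 ≤ frobNorm M :=
  Real.sqrt_nonneg _

lemma le_sqrt_one_add_mul_of_abs_sq_sub_sq_lt {a b ε : ℝ} (ha : 0 ≤ a) (hb : 0 ≤ b)
    (h : |a ^ 2 - b ^ 2| < ε * b ^ 2) : a ≤ √(1 + ε) * b :=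
  calc a = √(a ^ 2) := (Real.sqrt_sq ha).symm
    _ ≤ √((1 + ε) * b ^ 2) := Real.sqrt_le_sqrt (by linarith [(abs_lt.1 h).2])
    _ = √(1 + ε) * b := by rw [Real.sqrt_mul' _ (sq_nonneg b), Real.sqrt_sq hb]

lemma frobNorm_sq {m n : ℕ} (M : Matrix (Fin m) (Fin n) ℝ) :
    frobNorm M ^ 2 = ∑ i, ∑ j, M i j ^ 2 :=
  Real.sq_sqrt (by positivity)

lemma frobNorm_sq_pos {m n : ℕ} {M : Matrix (Fin m) (Fin n) ℝ} (hM : M ≠ 0) :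
    0 < frobNorm M ^ 2 := by
  obtain ⟨i, j, hij⟩ : ∃ i j, M i j ≠ 0 := by
    by_contra! h
    exact hM (Matrix.ext h)
  rw [frobNorm_sq]
  calc 0 < M i j ^ 2 := by positivity
    _ ≤ ∑ j', M i j' ^ 2 := single_le_sum (fun _ _ => sq_nonneg _) (mem_univ j)
    _ ≤ _ := single_le_sum (fun _ _ => sum_nonneg fun _ _ => sq_nonneg _) (mem_univ i)

lemma trace_transpose_mul_self_eq_frobNorm_sq {m n : ℕ} (C : Matrix (Fin m) (Fin n) ℝ) :
    (Cᵀ * C).trace = frobNorm C ^ 2 := by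
  rw [frobNorm_sq]
  simp only [Matrix.trace, Matrix.diag, Matrix.mul_apply, Matrix.transpose_apply, sq]
  exact sum_comm

lemma frobNorm_mul_signMatrix_sq {n d t : ℕ} (ht : t ≠ 0) (C : Matrix (Fin n) (Fin d) ℝ)
    (ω : Fin d → Fin t → Bool) :
    frobNorm (C * signMatrix d t ω) ^ 2 = frobNorm C ^ 2 + offDiagForm (Cᵀ * C) ω / t := by
  have htR : (0 : ℝ) < t := by positivity
  have hentry : ∀ i l, (C * signMatrix d t ω) i l = (∑ k, C i k * rademacher ω (k, l)) / √t := by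
    intro i l
    simp only [Matrix.mul_apply, sum_div, mul_div_assoc]
    rfl
  have hcol : ∀ l, ∑ i, (∑ k, C i k * rademacher ω (k, l)) ^ 2 = frobNorm C ^ 2 +
      ∑ p ∈ (univ : Finset (Fin d)).offDiag, (Cᵀ * C) p.1 p.2 * pairSign ω (p, l) := by
    intro l
    rw [sum_sq_sum_mul_eq_gram,
      sum_sum_mul_eq_trace_add_offDiag _ fun k => rademacher_mul_self ω _,
      trace_transpose_mul_self_eq_frobNorm_sq]
    rfl
  rw [frobNorm_sq]
  simp only [hentry, div_pow, Real.sq_sqrt htR.le]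
  rw [sum_comm]
  simp only [← sum_div, hcol, sum_add_distrib, sum_const, card_univ, Fintype.card_fin,
    nsmul_eq_mul, offDiagForm, sum_product]
  rw [sum_comm (s := (univ : Finset (Fin d)).offDiag)]
  field_simp

lemma sum_offDiag_gram_sq_le {m n : ℕ} (C : Matrix (Fin m) (Fin n) ℝ) :
    ∑ p ∈ (univ : Finset (Fin n)).offDiag, (Cᵀ * C) p.1 p.2 ^ 2 ≤ (frobNorm C ^ 2) ^ 2 := by
  have hCS : ∀ k k', (Cᵀ * C) k k' ^ 2 ≤ (∑ i, C i k ^ 2) * ∑ i, C i k' ^ 2 := fun k k' =>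
    sum_mul_sq_le_sq_mul_sq univ (fun i => C i k) (fun i => C i k')
  calc ∑ p ∈ (univ : Finset (Fin n)).offDiag, (Cᵀ * C) p.1 p.2 ^ 2
      ≤ ∑ p ∈ (univ : Finset (Fin n)) ×ˢ univ, (Cᵀ * C) p.1 p.2 ^ 2 :=
        sum_le_sum_of_subset_of_nonneg
          (diag_union_offDiag (univ : Finset (Fin n)) ▸ subset_union_right)
          fun _ _ _ => sq_nonneg _
    _ ≤ ∑ k, ∑ k', (∑ i, C i k ^ 2) * ∑ i, C i k' ^ 2 := by
        rw [sum_product]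
        exact sum_le_sum fun k _ => sum_le_sum fun k' _ => hCS k k'
    _ = (frobNorm C ^ 2) ^ 2 := by
        rw [← sum_mul_sum, ← sq, frobNorm_sq, sum_comm]

lemma uniformOfFintype_meas_abs_ge_le {Ω : Type*} [Fintype Ω] [Nonempty Ω] [MeasurableSpace Ω]
    [MeasurableSingletonClass Ω] (X : Ω → ℝ) {a : ℝ} (ha : 0 < a) :
    (PMF.uniformOfFintype Ω).toMeasure {ω | a ≤ |X ω|} ≤
      ENNReal.ofReal ((∑ ω, X ω ^ 2) / (Fintype.card Ω * a ^ 2)) := by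
  set μ := (PMF.uniformOfFintype Ω).toMeasure
  have hmarkov := mul_meas_ge_le_integral_of_nonneg (μ := μ) (f := fun ω => X ω ^ 2)
    (Filter.Eventually.of_forall fun ω => sq_nonneg _) Integrable.of_finite (a ^ 2)
  have hset : {ω | a ^ 2 ≤ X ω ^ 2} = {ω | a ≤ |X ω|} := by
    ext ω; simp [sq_le_sq, abs_of_pos ha]
  have hint : ∫ ω, X ω ^ 2 ∂μ = (∑ ω, X ω ^ 2) / Fintype.card Ω := by
    simp [μ, PMF.integral_eq_sum, PMF.uniformOfFintype_apply, ← mul_sum, div_eq_inv_mul]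
  rw [hset, hint] at hmarkov
  rw [← ofReal_measureReal]
  refine ENNReal.ofReal_le_ofReal ?_
  rw [le_div_iff₀ (by positivity)]
  calc μ.real {ω | a ≤ |X ω|} * (Fintype.card Ω * a ^ 2)
      = a ^ 2 * μ.real {ω | a ≤ |X ω|} * Fintype.card Ω := by ring
    _ ≤ ∑ ω, X ω ^ 2 := (le_div_iff₀ (by positivity)).1 hmarkov

lemma sum_frobNorm_mul_signMatrix_sq_sub_sq_le {n d t : ℕ} (ht : t ≠ 0)
    (C : Matrix (Fin n) (Fin d) ℝ) :
    ∑ ω, (frobNorm (C * signMatrix d t ω) ^ 2 - frobNorm C ^ 2) ^ 2 ≤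
      Fintype.card (Fin d → Fin t → Bool) * (2 * (frobNorm C ^ 2) ^ 2 / t) := by
  have hG : (Cᵀ * C).IsSymm := Matrix.transpose_mul _ _
  simp only [frobNorm_mul_signMatrix_sq ht, add_sub_cancel_left, div_pow, ← sum_div,
    sum_offDiagForm_sq hG, Fintype.card_fin]
  calc _ = (Fintype.card (Fin d → Fin t → Bool) : ℝ) *
        (2 * (∑ p ∈ (univ : Finset (Fin d)).offDiag, (Cᵀ * C) p.1 p.2 ^ 2) / t) := by
        field_simp
    _ ≤ _ := by gcongr; exact sum_offDiag_gram_sq_le C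

/-- Chebyshev bound for the Frobenius norm after projection. -/
theorem statement10 (d t n : ℕ) (ht : 1 ≤ t) (C : Matrix (Fin n) (Fin d) ℝ)
    (hC : C ≠ 0) (ε : ℝ) (hε : 0 < ε) :
    signMeasure d t
        {ω | ε * frobNorm C ^ 2 ≤ |frobNorm (C * signMatrix d t ω) ^ 2 - frobNorm C ^ 2|}
      ≤ ENNReal.ofReal (2 / ((t : ℝ) * ε ^ 2)) ∧
    ENNReal.ofReal (1 - 2 / ((t : ℝ) * ε ^ 2)) ≤
      signMeasure d t
        {ω | frobNorm (C * signMatrix d t ω) ≤ Real.sqrt (1 + ε) * frobNorm C} := by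
  have ht0 : t ≠ 0 := by omega
  have hC2 := frobNorm_sq_pos hC
  set bad := {ω | ε * frobNorm C ^ 2 ≤ |frobNorm (C * signMatrix d t ω) ^ 2 - frobNorm C ^ 2|}
  have hbad : signMeasure d t bad ≤ ENNReal.ofReal (2 / ((t : ℝ) * ε ^ 2)) := by
    refine (uniformOfFintype_meas_abs_ge_le _ (by positivity)).trans
      (ENNReal.ofReal_le_ofReal ?_)
    rw [div_le_div_iff₀ (by positivity) (by positivity)]
    calc _ ≤ Fintype.card (Fin d → Fin t → Bool) * (2 * (frobNorm C ^ 2) ^ 2 / t) *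
          (t * ε ^ 2) := by gcongr; exact sum_frobNorm_mul_signMatrix_sq_sub_sq_le ht0 C
      _ = _ := by field_simp
  have hgood : badᶜ ⊆ {ω | frobNorm (C * signMatrix d t ω) ≤ √(1 + ε) * frobNorm C} :=
    fun ω hω => le_sqrt_one_add_mul_of_abs_sq_sub_sq_lt (frobNorm_nonneg _) (frobNorm_nonneg C)
      (not_le.1 hω)
  refine ⟨hbad, ?_⟩
  calc ENNReal.ofReal (1 - 2 / ((t : ℝ) * ε ^ 2))
      = 1 - ENNReal.ofReal (2 / ((t : ℝ) * ε ^ 2)) := by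
        rw [ENNReal.ofReal_sub _ (by positivity), ENNReal.ofReal_one]
    _ ≤ 1 - signMeasure d t bad := tsub_le_tsub_left hbad 1
    _ = signMeasure d t badᶜ := by
        have : IsProbabilityMeasure (signMeasure d t) := PMF.toMeasure.isProbabilityMeasure _
        exact (prob_compl_eq_one_sub MeasurableSet.of_discrete).symm
    _ ≤ _ := measure_mono hgood
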